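/- For integers 1 ≤ k ≤ N with k ≤ N^α (0<α<1) and 0 ≤ m ≤ k−1, the quantities M_m = ⌊(N−k)/(k−m)⌋ satisfy M_m ≥ N^{1−α} − 2, and L_m = C(k,m)·C(N−k,k−m)/M_m satisfies k·L_m ≤ N^{k(1+log 2)/log N} · N^{k−m−1+2α} · (1+o(1)) as N → ∞. -/
import Mathlib


open Real Filter

lemma aux_choose_le_two_pow (n r : ℕ) : n.choose r ≤ 2 ^ n := by
  rcases le_or_gt r n with h | h
  · calc n.choose r ≤ ∑ i ∈ Finset.range (n+1), n.choose i :=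
        Finset.single_le_sum (fun i _ => Nat.zero_le _) (Finset.mem_range.2 (Nat.lt_succ_of_le h))
      _ = 2 ^ n := Nat.sum_range_choose n
  · simp [Nat.choose_eq_zero_of_lt h]

lemma aux_div_sub_one_le (a b : ℕ) (hb : 0 < b) : (a:ℝ)/b - 1 ≤ ((a/b : ℕ):ℝ) := by
  have h1 : b * (a/b) + a % b = a := Nat.div_add_mod a b
  have h2 : a % b < b := Nat.mod_lt a hb
  have h1' : (b:ℝ) * ((a/b:ℕ):ℝ) + ((a % b : ℕ):ℝ) = a := by exact_mod_cast h1
  have h2' : ((a % b:ℕ):ℝ) < b := by exact_mod_cast h2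
  have hb' : (0:ℝ) < b := by exact_mod_cast hb
  rw [div_sub_one (ne_of_gt hb'), div_le_iff₀ hb']
  nlinarith

/-- with `k ≤ N^α` (`0 < α < 1`) and `0 ≤ m ≤ k−1`,
`M_m = ⌊(N−k)/(k−m)⌋ ≥ N^{1−α} − 2`, and
`k·L_m ≤ N^{k(1+log 2)/log N} · N^{k−m−1+2α} · (1+o(1))` as `N → ∞`,
where `L_m = C(k,m)·C(N−k,k−m)/M_m`. -/
theorem stmt16 (α : ℝ) (hα0 : 0 < α) (hα1 : α < 1) (k m : ℕ → ℕ)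
    (hk1 : ∀ N, 2 ≤ N → 1 ≤ k N) (hkN : ∀ N, 2 ≤ N → k N ≤ N)
    (hkα : ∀ N, 2 ≤ N → (k N : ℝ) ≤ (N : ℝ) ^ α)
    (hm : ∀ N, 2 ≤ N → m N ≤ k N - 1) :
    (∀ N : ℕ, 2 ≤ N →
      (N : ℝ) ^ (1 - α) - 2 ≤ (((N - k N) / (k N - m N) : ℕ) : ℝ)) ∧
    (∃ f : ℕ → ℝ, Tendsto f atTop (nhds 0) ∧ ∀ᶠ N : ℕ in atTop,
      (k N : ℝ) *
          (((k N).choose (m N) * (N - k N).choose (k N - m N) : ℕ) /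
            (((N - k N) / (k N - m N) : ℕ) : ℝ)) ≤
        (N : ℝ) ^ ((k N : ℝ) * (1 + Real.log 2) / Real.log N) *
          (N : ℝ) ^ ((k N : ℝ) - (m N : ℝ) - 1 + 2 * α) * (1 + f N)) := by
  have part1 : ∀ N : ℕ, 2 ≤ N →
      (N : ℝ) ^ (1 - α) - 2 ≤ (((N - k N) / (k N - m N) : ℕ) : ℝ) := by
    intro N hN2
    have hN0 : (0:ℝ) < N := by positivity
    have hK1 := hk1 N hN2
    have hKN := hkN N hN2
    have hKα := hkα N hN2
    have hmK : m N < k N := lt_of_le_of_lt (hm N hN2) (Nat.sub_lt hK1 one_pos)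
    have hD : 0 < k N - m N := Nat.sub_pos_of_lt hmK
    have hD' : (0:ℝ) < ((k N - m N : ℕ):ℝ) := by exact_mod_cast hD
    have hDle : ((k N - m N : ℕ):ℝ) ≤ (N:ℝ) ^ α := by
      refine le_trans ?_ hKα
      exact_mod_cast Nat.sub_le (k N) (m N)
    have hA : ((N - k N : ℕ):ℝ) = (N:ℝ) - (k N : ℝ) := by
      have := Nat.cast_sub hKN (R := ℝ); exact this
    have hKNr : (k N : ℝ) ≤ N := by exact_mod_cast hKN
    have hαpos : (0:ℝ) < (N:ℝ) ^ α := by positivity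
    have key : ((N:ℝ) - (N:ℝ)^α) / ((N:ℝ)^α) ≤ ((N - k N : ℕ):ℝ) / ((k N - m N : ℕ):ℝ) := by
      apply div_le_div₀ (by rw [hA]; linarith) (by rw [hA]; linarith) hD' hDle
    have hratio : (N:ℝ) ^ (1 - α) - 1 = ((N:ℝ) - (N:ℝ)^α) / ((N:ℝ)^α) := by
      rw [sub_div, div_self (ne_of_gt hαpos)]
      congr 1
      rw [Real.rpow_sub hN0, Real.rpow_one]
    have step1 := aux_div_sub_one_le (N - k N) (k N - m N) hD
    have : (N:ℝ) ^ (1 - α) - 1 ≤ ((N - k N : ℕ):ℝ) / ((k N - m N : ℕ):ℝ) := by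
      rw [hratio]; exact key
    linarith
  refine ⟨part1, 0, tendsto_const_nhds, ?_⟩
  have h1 : Tendsto (fun N : ℕ => ((N:ℝ)) ^ α) atTop atTop :=
    (tendsto_rpow_atTop hα0).comp tendsto_natCast_atTop_atTop
  have h2 : Tendsto (fun N : ℕ => ((N:ℝ)) ^ (1 - α)) atTop atTop :=
    (tendsto_rpow_atTop (by linarith)).comp tendsto_natCast_atTop_atTop
  filter_upwards [eventually_ge_atTop 2, h1.eventually_ge_atTop 2,
    h2.eventually_ge_atTop 4] with N hN2 hNα2 hN1α4
  have hN0 : (0:ℝ) < N := by positivity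
  have hK1 := hk1 N hN2
  have hKN := hkN N hN2
  have hKα := hkα N hN2
  have hmK : m N < k N := lt_of_le_of_lt (hm N hN2) (Nat.sub_lt hK1 one_pos)
  set K := k N with hKdef
  set M' := m N with hMdef
  set d := K - M' with hddef
  set Mq := ((N - K) / (K - M') : ℕ) with hMqdef
  have hd1 : 1 ≤ d := Nat.sub_pos_of_lt hmK
  -- lower bound on Mq
  have hMq : (N:ℝ)^(1-α) - 2 ≤ (Mq:ℝ) := part1 N hN2
  have hMqhalf : (N:ℝ)^(1-α)/2 ≤ (Mq:ℝ) := by linarith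
  have hMqpos : (0:ℝ) < (Mq:ℝ) := by nlinarith
  -- numerator bound
  have hnum : ((K.choose M' * (N - K).choose d : ℕ):ℝ) ≤ 2^K * (N:ℝ)^(d:ℕ) := by
    have hnat : K.choose M' * (N - K).choose d ≤ 2^K * N^d :=
      Nat.mul_le_mul (aux_choose_le_two_pow K M')
        (le_trans (Nat.choose_le_pow (N - K) d) (Nat.pow_le_pow_left (Nat.sub_le N K) d))
    exact_mod_cast hnat
  have hnumnn : (0:ℝ) ≤ 2^K * (N:ℝ)^(d:ℕ) := by positivity
  have hLHS : (K:ℝ) * (((K.choose M' * (N - K).choose d : ℕ):ℝ) / (Mq:ℝ)) ≤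
      (K:ℝ) * ((2^K * (N:ℝ)^(d:ℕ)) / ((N:ℝ)^(1-α)/2)) := by
    have : ((K.choose M' * (N - K).choose d : ℕ):ℝ) / (Mq:ℝ) ≤
        (2^K * (N:ℝ)^(d:ℕ)) / ((N:ℝ)^(1-α)/2) :=
      div_le_div₀ hnumnn hnum (by positivity) hMqhalf
    exact mul_le_mul_of_nonneg_left this (by positivity)
  -- rewrite RHS
  have hlogN : Real.log N ≠ 0 := by
    have : (1:ℝ) < N := by exact_mod_cast lt_of_lt_of_le one_lt_two hN2
    exact ne_of_gt (Real.log_pos this)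
  have hfac1 : (N : ℝ) ^ ((K : ℝ) * (1 + Real.log 2) / Real.log N) =
      Real.exp K * 2^K := by
    rw [Real.rpow_def_of_pos hN0]
    rw [show Real.log (N:ℝ) * ((K:ℝ) * (1 + Real.log 2) / Real.log (N:ℝ)) =
        (K:ℝ) * (1 + Real.log 2) by field_simp]
    rw [mul_add, mul_one, Real.exp_add]
    congr 1
    rw [Real.exp_nat_mul, Real.exp_log two_pos]
  have hdr : (K:ℝ) - (M':ℝ) = (d:ℝ) := by
    rw [hddef]; push_cast [Nat.cast_sub (le_of_lt hmK)]; ring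
  have hfac2 : (N : ℝ) ^ ((K : ℝ) - (M' : ℝ) - 1 + 2 * α) =
      (N:ℝ)^(d:ℕ) * (N:ℝ)^(2*α - 1) := by
    rw [hdr]
    rw [show (d:ℝ) - 1 + 2*α = (d:ℝ) + (2*α - 1) by ring]
    rw [Real.rpow_add hN0, Real.rpow_natCast]
  rw [hfac1, hfac2]
  -- final comparison
  have hexpK : (K:ℝ) + 1 ≤ Real.exp K := Real.add_one_le_exp _
  have hNα1 : (0:ℝ) < (N:ℝ)^(α-1) := by positivity
  have hsplit : (N:ℝ)^(2*α-1) = (N:ℝ)^α * (N:ℝ)^(α-1) := by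
    rw [← Real.rpow_add hN0]; ring_nf
  have hdiv : ((N:ℝ)^(1-α)/2)⁻¹ = 2 * (N:ℝ)^(α-1) := by
    rw [inv_div]
    rw [show α - 1 = -(1-α) by ring, Real.rpow_neg (le_of_lt hN0)]
    field_simp
  have hKpos : (0:ℝ) < K := by exact_mod_cast hK1
  calc (K:ℝ) * (((K.choose M' * (N - K).choose d : ℕ):ℝ) / (Mq:ℝ))
      ≤ (K:ℝ) * ((2^K * (N:ℝ)^(d:ℕ)) / ((N:ℝ)^(1-α)/2)) := hLHS
    _ = (2 * (K:ℝ) * (N:ℝ)^(α-1)) * (2^K * (N:ℝ)^(d:ℕ)) := by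
        rw [div_eq_mul_inv, hdiv]; ring
    _ ≤ (Real.exp K * (N:ℝ)^α * (N:ℝ)^(α-1)) * (2^K * (N:ℝ)^(d:ℕ)) := by
        apply mul_le_mul_of_nonneg_right _ (by positivity)
        apply mul_le_mul_of_nonneg_right _ (le_of_lt hNα1)
        nlinarith [Real.exp_pos (K:ℝ)]
    _ = Real.exp ↑K * 2 ^ K * ((N:ℝ)^(d:ℕ) * (N:ℝ)^(2*α-1)) * (1 + 0) := by
        rw [hsplit]; ring
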